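/- Let M be a connected m-dimensional CW complex with a fixed-point free cellular involution τ, and let q : M → M/τ be the quotient double covering. If secat(q) = m, then the ℤ/2-index of (M,τ) equals m − 1; that is, ((M,τ); ℝⁿ) satisfies the Borsuk–Ulam property for every n < m, but ((M,τ); ℝ^m) does not. -/

import Mathlib

open Metric Set

/-- A continuous local section of `p` over `U`. -/
def IsLocalSection {E B : Type*} [TopologicalSpace E] [TopologicalSpace B]
    (p : E → B) (U : Set B) : Prop :=
  ∃ s : U → E, Continuous s ∧ ∀ x : U, p (s x) = (x : B)

/-- The sectional category of a map `p : E → B`: the least number of open sets covering `B`,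
over each of which `p` admits a continuous local section; `⊤` if no finite cover exists. -/
noncomputable def secat {E B : Type*} [TopologicalSpace E] [TopologicalSpace B]
    (p : E → B) : ℕ∞ :=
  sInf {n : ℕ∞ | ∃ k : ℕ, n = (k : ℕ∞) ∧ ∃ U : Fin k → Set B,
    (∀ i, IsOpen (U i)) ∧ (⋃ i, U i) = Set.univ ∧ ∀ i, IsLocalSection p (U i)}

/-- A subset is contractible within the ambient space if its inclusion is nullhomotopic. -/
def ContractibleIn {X : Type*} [TopologicalSpace X] (U : Set X) : Prop :=
  ContinuousMap.Nullhomotopic (⟨(Subtype.val : U → X), continuous_subtype_val⟩ : C(U, X))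

/-- Lusternik–Schnirelmann category: least number of open sets covering `X`, each
contractible within `X`. -/
noncomputable def LScat (X : Type*) [TopologicalSpace X] : ℕ∞ :=
  sInf {n : ℕ∞ | ∃ k : ℕ, n = (k : ℕ∞) ∧ ∃ U : Fin k → Set X,
    (∀ i, IsOpen (U i)) ∧ (⋃ i, U i) = Set.univ ∧ ∀ i, ContractibleIn (U i)}

/-- Hurewicz fibration: the homotopy lifting property with respect to all spaces. -/
def IsHurewiczFibration {E B : Type*} [TopologicalSpace E] [TopologicalSpace B]
    (p : E → B) : Prop :=
  ∀ (Z : Type*) [TopologicalSpace Z] (H : Z × unitInterval → B) (h : Z → E),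
    Continuous H → Continuous h → (∀ z, p (h z) = H (z, 0)) →
    ∃ G : Z × unitInterval → E, Continuous G ∧ (∀ z, G (z, 0) = h z) ∧ ∀ w, p (G w) = H w

/-- The orbit relation of the action generated by a map `τ`. -/
def orbitRelOf {X : Type*} (τ : X → X) : X → X → Prop := fun x y => y = τ x

/-- Quotient of `X` by the (involutive) map `τ`, with the quotient topology. -/
abbrev InvolQuot {X : Type*} [TopologicalSpace X] (τ : X → X) : Type _ := Quot (orbitRelOf τ)

/-- The quotient map `X → X/τ`. -/
def involQuotMk {X : Type*} [TopologicalSpace X] (τ : X → X) : X → InvolQuot τ :=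
  Quot.mk (orbitRelOf τ)

/-- The ordered configuration space `F(Y,2)` of two distinct points of `Y`. -/
abbrev Conf2 (Y : Type*) [TopologicalSpace Y] : Type _ := {p : Y × Y // p.1 ≠ p.2}

/-- The swap involution `τ₂` on `F(Y,2)`. -/
def confSwap {Y : Type*} [TopologicalSpace Y] : Conf2 Y → Conf2 Y :=
  fun p => ⟨(p.1.2, p.1.1), Ne.symm p.2⟩

/-- The unordered configuration space `D(Y,2) = F(Y,2)/τ₂`. -/
abbrev UConf2 (Y : Type*) [TopologicalSpace Y] : Type _ := InvolQuot (confSwap (Y := Y))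

/-- The quotient double covering `q^Y : F(Y,2) → D(Y,2)`. -/
def confQuotMk (Y : Type*) [TopologicalSpace Y] : Conf2 Y → UConf2 Y :=
  involQuotMk confSwap

/-- The Borsuk–Ulam property for the triple `((X,τ);Y)`. -/
def BorsukUlamProperty (X : Type*) [TopologicalSpace X] (τ : X → X)
    (Y : Type*) [TopologicalSpace Y] : Prop :=
  ∀ f : X → Y, Continuous f → ∃ x : X, f (τ x) = f x

/-- The `m`-sphere as the unit sphere of `ℝ^{m+1}`. -/
abbrev Sph (m : ℕ) : Type := Metric.sphere (0 : EuclideanSpace ℝ (Fin (m + 1))) 1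

/-- The antipodal involution on the sphere. -/
noncomputable def antipodal (m : ℕ) : Sph m → Sph m := fun x => -x

/-- The smallest dimension of a Euclidean space into which `Y` embeds. -/
noncomputable def embDim (Y : Type*) [TopologicalSpace Y] : ℕ∞ :=
  sInf {n : ℕ∞ | ∃ k : ℕ, n = (k : ℕ∞) ∧
    ∃ e : Y → EuclideanSpace ℝ (Fin k), Topology.IsEmbedding e}

/-- The `ℤ/2`-index of `(X,τ)`: the least `n` such that there is a continuous map
`X → Sⁿ` which is equivariant for `τ` and the antipodal involution. -/
noncomputable def z2Index {X : Type*} [TopologicalSpace X] (τ : X → X) : ℕ∞ :=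
  sInf {n : ℕ∞ | ∃ k : ℕ, n = (k : ℕ∞) ∧
    ∃ g : X → Sph k, Continuous g ∧ ∀ x, g (τ x) = antipodal k (g x)}

section CW

/-- A (classical) CW-complex structure on a Hausdorff space `X`: a family of cells
with characteristic maps from closed disks, the images of the open disks partitioning `X`,
each attaching map sending the boundary sphere into cells of lower dimension, together with
closure finiteness (C) and the weak topology (W). -/
structure CWStructure (X : Type u) [TopologicalSpace X] : Type (u + 1) where
  /-- index type of the `n`-cells -/
  cell : ℕ → Type u
  /-- characteristic map of each `n`-cell -/
  map : (n : ℕ) → cell n → EuclideanSpace ℝ (Fin n) → X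
  continuousOn : ∀ n i, ContinuousOn (map n i) (closedBall 0 1)
  injOn : ∀ n i, Set.InjOn (map n i) (ball 0 1)
  partition : ∀ x : X, ∃! p : Σ n, cell n, x ∈ map p.1 p.2 '' ball 0 1
  mapsTo_boundary : ∀ n i, Set.MapsTo (map n i) (sphere 0 1)
    (⋃ (m : ℕ) (_ : m < n) (j : cell m), map m j '' closedBall 0 1)
  closureFinite : ∀ n i, {p : Σ m, cell m |
    (map p.1 p.2 '' ball 0 1 ∩ map n i '' closedBall 0 1).Nonempty}.Finite
  weakTopology : ∀ A : Set X,
    (∀ n i, IsClosed (A ∩ map n i '' closedBall 0 1)) → IsClosed A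

namespace CWStructure

variable {X : Type u} [TopologicalSpace X] (S : CWStructure X)

/-- The `n`-skeleton of a CW structure. -/
def skeleton (n : ℕ) : Set X :=
  ⋃ (m : ℕ) (_ : m ≤ n) (j : S.cell m), S.map m j '' closedBall 0 1

/-- The CW structure has dimension at most `d`. -/
def DimLE (d : ℕ) : Prop := ∀ n, d < n → IsEmpty (S.cell n)

/-- The CW structure has dimension exactly `d`. -/
def DimEq (d : ℕ) : Prop := S.DimLE d ∧ Nonempty (S.cell d)

/-- A self-map is cellular if it maps each skeleton into itself. -/
def Cellular (f : X → X) : Prop := ∀ n, Set.MapsTo f (S.skeleton n) (S.skeleton n)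

end CWStructure

/-- The homotopical dimension of `X` is at most `d`: `X` is homotopy equivalent to a
CW complex of dimension at most `d`. -/
def HDimLE (X : Type u) [TopologicalSpace X] (d : ℕ) : Prop :=
  ∃ (Z : Type u) (_ : TopologicalSpace Z) (S : CWStructure Z),
    S.DimLE d ∧ Nonempty (ContinuousMap.HomotopyEquiv Z X)

end CW

/-!
An equivariant map `g : X → Sᵏ` yields the open cover of `X/τ` by the images of the half-spaces
`{gᵢ > 0}`, `i ≤ k`; each is mapped homeomorphically by `q`, so `secat q ≤ k + 1`. Conversely, a
local section of `q` over `U` splits `q⁻¹ U` into two open halves exchanged by `τ`; an Urysohn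
function taken with sign `+` on one half and `-` on the other is odd, and `k + 1` of these, one
for each set of a sectional cover, form an odd map `X → ℝᵏ⁺¹ ∖ 0`, i.e. an equivariant map to
`Sᵏ`. This needs `X` normal, which a finite-dimensional CW complex is, by Tietze extension cell
by cell. Hence `ind_{ℤ/2} = secat q - 1`. Finally `((X,τ); ℝⁿ⁺¹)` fails the Borsuk–Ulam property
exactly when there is an equivariant map to `Sⁿ`, e.g. `x ↦ f x - f (τ x)` normalised.
-/

open Function Topology

lemma ENat.coe_mem_of_sInf_eq {s : Set ℕ∞} {n : ℕ} (h : sInf s = n) : (n : ℕ∞) ∈ s :=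
  h ▸ csInf_mem (nonempty_iff_ne_empty.2 fun he => by simp [he] at h)

lemma ContinuousOn.exists_continuous_eqOn {E : Type*} [TopologicalSpace E] [NormalSpace E]
    {K : Set E} (hK : IsClosed K) {f : E → ℝ} (hf : ContinuousOn f K) :
    ∃ g : E → ℝ, Continuous g ∧ EqOn g f K := by
  obtain ⟨g, hg⟩ := ContinuousMap.exists_restrict_eq hK ⟨K.domRestrict f, hf.domRestrict⟩
  exact ⟨g, g.continuous, fun y hy => DFunLike.congr_fun hg ⟨y, hy⟩⟩

section Secat

variable {E B : Type*} [TopologicalSpace E] [TopologicalSpace B] {p : E → B}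

lemma secat_le {k : ℕ} (U : Fin k → Set B) (hUo : ∀ i, IsOpen (U i)) (hU : ⋃ i, U i = univ)
    (hs : ∀ i, IsLocalSection p (U i)) : secat p ≤ k :=
  sInf_le ⟨k, rfl, U, hUo, hU, hs⟩

lemma exists_cover_of_secat_eq {k : ℕ} (h : secat p = k) :
    ∃ U : Fin k → Set B, (∀ i, IsOpen (U i)) ∧ ⋃ i, U i = univ ∧
      ∀ i, IsLocalSection p (U i) := by
  obtain ⟨k', hk', hU⟩ := ENat.coe_mem_of_sInf_eq h
  obtain rfl : k = k' := by exact_mod_cast hk'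
  exact hU

lemma secat_eq_zero_iff : secat p = 0 ↔ IsEmpty B := by
  refine ⟨fun h => ?_, fun hB => nonpos_iff_eq_zero.1 ?_⟩
  · obtain ⟨U, -, hU, -⟩ := exists_cover_of_secat_eq (k := 0) (by simpa using h)
    exact ⟨fun b => by simpa using hU.ge (mem_univ b)⟩
  · exact_mod_cast secat_le (k := 0) (fun _ => ∅) (fun _ => isOpen_empty)
      (by simpa using (univ_eq_empty_iff.2 hB).symm) finZeroElim

lemma isLocalSection_range_comp {Y : Type*} [TopologicalSpace Y] {g : Y → E} (hg : Continuous g)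
    (hpg : IsEmbedding (p ∘ g)) : IsLocalSection p (range (p ∘ g)) :=
  ⟨g ∘ hpg.toHomeomorph.symm, hg.comp hpg.toHomeomorph.symm.continuous,
    fun b => congrArg Subtype.val (hpg.toHomeomorph.apply_symm_apply b)⟩

end Secat

section InvolQuot

variable {X : Type*} [TopologicalSpace X] {τ : X → X}

lemma continuous_involQuotMk : Continuous (involQuotMk τ) := continuous_quot_mk

lemma involQuotMk_apply_self (x : X) : involQuotMk τ (τ x) = involQuotMk τ x :=
  (Quot.sound (show orbitRelOf τ x (τ x) from rfl)).symm

lemma involQuotMk_eq_iff (hτ : Involutive τ) {x y : X} :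
    involQuotMk τ x = involQuotMk τ y ↔ y = x ∨ y = τ x := by
  refine ⟨fun h => ?_, ?_⟩
  · have hpair : ∀ a b, orbitRelOf τ a b → ({a, τ a} : Set X) = {b, τ b} := by
      rintro a _ rfl
      rw [hτ a, pair_comm]
    have h' : ({x, τ x} : Set X) = {y, τ y} := congrArg (Quot.lift _ hpair) h
    have hy : y ∈ ({x, τ x} : Set X) := h' ▸ mem_insert y {τ y}
    simpa using hy
  · rintro (rfl | rfl)
    exacts [rfl, (involQuotMk_apply_self x).symm]

lemma preimage_image_involQuotMk (hτ : Involutive τ) (s : Set X) :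
    involQuotMk τ ⁻¹' (involQuotMk τ '' s) = s ∪ τ ⁻¹' s := by
  ext x
  simp only [mem_preimage, mem_image, mem_union, involQuotMk_eq_iff hτ]
  constructor
  · rintro ⟨y, hy, rfl | rfl⟩
    exacts [Or.inl hy, Or.inr (by rwa [hτ y])]
  · rintro (h | h)
    exacts [⟨x, h, Or.inl rfl⟩, ⟨τ x, h, Or.inr (hτ x).symm⟩]

lemma isOpenMap_involQuotMk (hτc : Continuous τ) (hτ : Involutive τ) :
    IsOpenMap (involQuotMk τ) := fun s hs => by
  rw [← isQuotientMap_quot_mk.isOpen_preimage]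
  change IsOpen (involQuotMk τ ⁻¹' _)
  rw [preimage_image_involQuotMk hτ]
  exact hs.union (hs.preimage hτc)

lemma isEmpty_involQuot_iff : IsEmpty (InvolQuot τ) ↔ IsEmpty X :=
  ⟨fun h => ⟨fun x => h.false (involQuotMk τ x)⟩, fun _ => inferInstance⟩

end InvolQuot

section EquivariantSphereMap

variable {X : Type*} [TopologicalSpace X] {τ : X → X}

def HasEquivariantMapToSphere (τ : X → X) (k : ℕ) : Prop :=
  ∃ g : X → Sph k, Continuous g ∧ ∀ x, g (τ x) = antipodal k (g x)

lemma z2Index_le {k : ℕ} (h : HasEquivariantMapToSphere τ k) : z2Index τ ≤ k :=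
  sInf_le ⟨k, rfl, h⟩

lemma le_z2Index {n : ℕ∞} (h : ∀ k : ℕ, HasEquivariantMapToSphere τ k → n ≤ k) :
    n ≤ z2Index τ :=
  le_sInf fun _ ⟨k, hk, hτk⟩ => hk ▸ h k hτk

lemma hasEquivariantMapToSphere_of_isEmpty [IsEmpty X] (k : ℕ) :
    HasEquivariantMapToSphere τ k :=
  ⟨isEmptyElim, continuous_of_discreteTopology, isEmptyElim⟩

lemma coe_antipodal {k : ℕ} (x : Sph k) :
    (antipodal k x : EuclideanSpace ℝ (Fin (k + 1))) = -x :=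
  coe_neg_sphere x

lemma antipodal_ne_self {k : ℕ} (x : Sph k) : antipodal k x ≠ x := fun h => by
  have hx : -(x : EuclideanSpace ℝ (Fin (k + 1))) = x := by rw [← coe_antipodal, h]
  have h2x : (2 : ℝ) • (x : EuclideanSpace ℝ (Fin (k + 1))) = 0 := by
    rw [two_smul]
    nth_rw 1 [← hx]
    exact neg_add_cancel _
  exact ne_zero_of_mem_sphere one_ne_zero x (by simpa using h2x)

lemma hasEquivariantMapToSphere_of_odd {k : ℕ} {Φ : X → EuclideanSpace ℝ (Fin (k + 1))}
    (hΦc : Continuous Φ) (hΦτ : ∀ x, Φ (τ x) = -Φ x) (hΦ0 : ∀ x, Φ x ≠ 0) :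
    HasEquivariantMapToSphere τ k := by
  have hn : ∀ x, ‖Φ x‖ ≠ 0 := fun x => norm_ne_zero_iff.2 (hΦ0 x)
  have hmem : ∀ x, ‖Φ x‖⁻¹ • Φ x ∈ sphere (0 : EuclideanSpace ℝ (Fin (k + 1))) 1 := fun x => by
    rw [mem_sphere_zero_iff_norm, norm_smul, norm_inv, norm_norm, inv_mul_cancel₀ (hn x)]
  refine ⟨fun x => ⟨_, hmem x⟩, ((hΦc.norm.inv₀ hn).smul hΦc).subtype_mk hmem, fun x => ?_⟩
  ext1
  rw [coe_antipodal]
  simp only [hΦτ x, norm_neg, smul_neg]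

lemma borsukUlamProperty_succ_iff (hτc : Continuous τ) (hτ : Involutive τ) {k : ℕ} :
    BorsukUlamProperty X τ (EuclideanSpace ℝ (Fin (k + 1))) ↔
      ¬ HasEquivariantMapToSphere τ k := by
  refine ⟨fun hBU ⟨g, hgc, hgτ⟩ => ?_, fun hno f hf => ?_⟩
  · obtain ⟨x, hx⟩ := hBU _ (continuous_subtype_val.comp hgc)
    exact antipodal_ne_self (g x) (hgτ x ▸ Subtype.ext hx)
  · by_contra! hne
    exact hno <| hasEquivariantMapToSphere_of_odd (Φ := fun x => f x - f (τ x))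
      (hf.sub (hf.comp hτc)) (fun x => by simp only [hτ x, neg_sub])
      (fun x => sub_ne_zero.2 (hne x).symm)

end EquivariantSphereMap

section FreeInvolution

variable {X : Type*} [TopologicalSpace X] {τ : X → X}

lemma IsLocalSection.exists_halves [T2Space X] (hτc : Continuous τ) (hτ : Involutive τ)
    (hfree : ∀ x, τ x ≠ x) {U : Set (InvolQuot τ)} (hU : IsOpen U)
    (hs : IsLocalSection (involQuotMk τ) U) :
    ∃ A : Set X, IsOpen A ∧ Disjoint A (τ ⁻¹' A) ∧ involQuotMk τ ⁻¹' U ⊆ A ∪ τ ⁻¹' A := by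
  classical
  obtain ⟨s, hsc, hs⟩ := hs
  let σ : InvolQuot τ → X := fun u => if h : u ∈ U then s ⟨u, h⟩ else u.out
  have hσc : ContinuousOn σ U := by
    rw [continuousOn_iff_continuous_domRestrict]
    convert hsc using 1
    ext ⟨u, hu⟩
    exact dif_pos hu
  have hσ : ∀ x, involQuotMk τ x ∈ U →
      σ (involQuotMk τ x) = x ∨ σ (involQuotMk τ x) = τ x := fun x hx => by
    rw [← involQuotMk_eq_iff hτ, show σ (involQuotMk τ x) = s ⟨_, hx⟩ from dif_pos hx]
    exact (hs ⟨_, hx⟩).symm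
  refine ⟨{x | involQuotMk τ x ∈ U ∧ σ (involQuotMk τ x) ≠ τ x}, ?_, ?_, fun x hx => ?_⟩
  · exact ((hσc.comp continuous_involQuotMk.continuousOn (mapsTo_preimage _ _)).prodMk
      hτc.continuousOn).isOpen_inter_preimage (hU.preimage continuous_involQuotMk)
      isClosed_diagonal.isOpen_compl
  · refine disjoint_left.2 fun x ⟨hxU, hxσ⟩ ⟨_, hτxσ⟩ => ?_
    rw [involQuotMk_apply_self, hτ x] at hτxσ
    exact (hσ x hxU).elim hτxσ hxσ
  · by_cases h : σ (involQuotMk τ x) = τ x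
    · refine Or.inr ⟨?_, ?_⟩ <;> rw [involQuotMk_apply_self]
      · exact hx
      · rw [hτ x, h]
        exact hfree x
    · exact Or.inl ⟨hx, h⟩

lemma exists_odd_ne_zero_on [NormalSpace X] (hτc : Continuous τ) (hτ : Involutive τ)
    {A C : Set X} (hA : IsOpen A) (hAτ : Disjoint A (τ ⁻¹' A)) (hC : IsClosed C)
    (hCA : C ⊆ A ∪ τ ⁻¹' A) :
    ∃ ψ : X → ℝ, Continuous ψ ∧ (∀ x, ψ (τ x) = -ψ x) ∧ ∀ x ∈ C, ψ x ≠ 0 := by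
  classical
  have hW : ∀ x, τ x ∈ A ∪ τ ⁻¹' A ↔ x ∈ A ∪ τ ⁻¹' A := fun x => by
    simp only [mem_union, mem_preimage, hτ x, or_comm]
  obtain ⟨φ, hφ0, hφ1, -⟩ := exists_continuous_zero_one_of_isClosed
    (hA.union (hA.preimage hτc)).isClosed_compl (hC.union (hC.preimage hτc))
    (disjoint_left.2 fun x hxW hxC => hxW <| hxC.elim (fun h => hCA h)
      fun h => (hW x).1 (hCA h))
  have hφW : ∀ x, x ∉ A ∪ τ ⁻¹' A → φ x = 0 ∧ φ (τ x) = 0 := fun x hx =>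
    ⟨hφ0 hx, hφ0 (mt (hW x).1 hx)⟩
  refine ⟨A.piecewise φ (fun x => -φ (τ x)), φ.continuous.piecewise (fun x hx => ?_)
    (φ.continuous.comp hτc).neg, fun x => ?_, fun x hx => ?_⟩
  · -- `τ ⁻¹' A` is an open set disjoint from `A`, so the frontier of `A` avoids both
    rw [hA.frontier_eq] at hx
    have hτx : τ x ∉ A := fun h => (mem_closure_iff.1 hx.1 _ (hA.preimage hτc) h).elim
      fun y hy => disjoint_left.1 hAτ hy.2 hy.1
    rw [(hφW x (by simp [hx.2, hτx])).1, (hφW x (by simp [hx.2, hτx])).2, neg_zero]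
  · by_cases hx : x ∈ A
    · have hτx : τ x ∉ A := disjoint_left.1 hAτ hx
      simp [hx, hτx, hτ x]
    · by_cases hτx : τ x ∈ A
      · simp [hx, hτx]
      · have := hφW x (by simp [hx, hτx])
        simp [hx, hτx, hτ x, this.1, this.2]
  · have h1 : φ x = 1 := hφ1 (Or.inl hx)
    have h2 : φ (τ x) = 1 := hφ1 (Or.inr (by rwa [mem_preimage, hτ x]))
    by_cases hxA : x ∈ A <;> simp [hxA, h1, h2]

lemma hasEquivariantMapToSphere_of_secat_eq [T2Space X] [NormalSpace X] (hτc : Continuous τ)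
    (hτ : Involutive τ) (hfree : ∀ x, τ x ≠ x) {k : ℕ}
    (h : secat (involQuotMk τ) = (k + 1 : ℕ)) : HasEquivariantMapToSphere τ k := by
  obtain ⟨U, hUo, hU, hs⟩ := exists_cover_of_secat_eq h
  choose A hAo hAτ hUA using fun i => (hs i).exists_halves hτc hτ hfree (hUo i)
  have hAcov : ⋃ i, (A i ∪ τ ⁻¹' A i) = univ := eq_univ_of_forall fun x => by
    obtain ⟨i, hi⟩ := mem_iUnion.1 (hU.ge (mem_univ (involQuotMk τ x)))
    exact mem_iUnion.2 ⟨i, hUA i hi⟩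
  obtain ⟨C, hC, hCc, hCA⟩ := exists_iUnion_eq_closed_subset
    (fun i => (hAo i).union ((hAo i).preimage hτc)) (fun _ => toFinite _) hAcov
  choose ψ hψc hψτ hψ0 using fun i => exists_odd_ne_zero_on hτc hτ (hAo i) (hAτ i) (hCc i) (hCA i)
  refine hasEquivariantMapToSphere_of_odd (Φ := fun x => WithLp.toLp 2 fun i => ψ i x)
    ((PiLp.continuous_toLp 2 _).comp (continuous_pi hψc)) (fun x => ?_) (fun x hx => ?_)
  · ext i
    simp [hψτ]
  · obtain ⟨i, hi⟩ := mem_iUnion.1 (hC.ge (mem_univ x))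
    exact hψ0 i x hi (by simpa using congrArg (· i) hx)

lemma secat_le_of_hasEquivariantMapToSphere (hτc : Continuous τ) (hτ : Involutive τ) {k : ℕ}
    (hg : HasEquivariantMapToSphere τ k) : secat (involQuotMk τ) ≤ (k + 1 : ℕ) := by
  obtain ⟨g, hgc, hgτ⟩ := hg
  let c : Fin (k + 1) → X → ℝ := fun i x => (g x : EuclideanSpace ℝ (Fin (k + 1))) i
  have hcc : ∀ i, Continuous (c i) := fun i =>
    (EuclideanSpace.proj i).continuous.comp (continuous_subtype_val.comp hgc)
  have hcτ : ∀ i x, c i (τ x) = -c i x := fun i x => by simp [c, hgτ, coe_antipodal]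
  let W : Fin (k + 1) → Set X := fun i => {x | 0 < c i x}
  have hWo : ∀ i, IsOpen (W i) := fun i => isOpen_lt continuous_const (hcc i)
  have hinj : ∀ i, Injective (involQuotMk τ ∘ ((↑) : W i → X)) := by
    rintro i ⟨x, hx⟩ ⟨y, hy⟩ hxy
    rcases (involQuotMk_eq_iff hτ).1 hxy with rfl | rfl
    · rfl
    · simp only [W, mem_ofPred_eq, hcτ] at hx hy
      linarith
  have hqW : ∀ i, IsOpenMap (involQuotMk τ ∘ ((↑) : W i → X)) := fun i =>
    (isOpenMap_involQuotMk hτc hτ).comp (hWo i).isOpenMap_subtype_val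
  refine secat_le (fun i => range (involQuotMk τ ∘ ((↑) : W i → X)))
    (fun i => (hqW i).isOpen_range) (eq_univ_of_forall fun u => ?_) fun i =>
      isLocalSection_range_comp continuous_subtype_val
        (IsOpenEmbedding.of_continuous_injective_isOpenMap
          (continuous_involQuotMk.comp continuous_subtype_val) (hinj i) (hqW i)).isEmbedding
  obtain ⟨x, rfl⟩ := Quot.exists_rep u
  obtain ⟨i, hi⟩ : ∃ i, c i x ≠ 0 := by
    by_contra! h0
    exact ne_zero_of_mem_sphere one_ne_zero (g x) (by ext i; exact h0 i)
  rcases hi.lt_or_gt with hneg | hpos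
  · exact mem_iUnion.2 ⟨i, ⟨τ x, show 0 < c i (τ x) by linarith [hcτ i x]⟩,
      involQuotMk_apply_self x⟩
  · exact mem_iUnion.2 ⟨i, ⟨x, hpos⟩, rfl⟩

theorem z2Index_eq_secat_sub_one [T2Space X] [NormalSpace X] (hτc : Continuous τ)
    (hτ : Involutive τ) (hfree : ∀ x, τ x ≠ x) : z2Index τ = secat (involQuotMk τ) - 1 := by
  refine le_antisymm ?_ (le_z2Index fun k hk => ?_)
  · induction hs : secat (involQuotMk τ) using ENat.recTopCoe with
    | top => exact le_top
    | coe m =>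
      cases m with
      | zero =>
        have : IsEmpty X := isEmpty_involQuot_iff.1 (secat_eq_zero_iff.1 hs)
        exact (z2Index_le (hasEquivariantMapToSphere_of_isEmpty 0)).trans (by norm_num)
      | succ k =>
        refine (z2Index_le (hasEquivariantMapToSphere_of_secat_eq hτc hτ hfree hs)).trans_eq ?_
        norm_cast
  · rw [tsub_le_iff_right]
    exact_mod_cast secat_le_of_hasEquivariantMapToSphere hτc hτ hk

theorem borsukUlamProperty_of_lt_secat (hτc : Continuous τ) (hτ : Involutive τ) {n : ℕ}
    (hn : (n : ℕ∞) < secat (involQuotMk τ)) :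
    BorsukUlamProperty X τ (EuclideanSpace ℝ (Fin n)) := by
  cases n with
  | zero =>
    obtain ⟨x⟩ : Nonempty X := by
      by_contra hX
      rw [not_nonempty_iff, ← isEmpty_involQuot_iff, ← secat_eq_zero_iff (p := involQuotMk τ)] at hX
      simp [hX] at hn
    intro f _
    exact ⟨x, Subsingleton.elim _ _⟩
  | succ k =>
    rw [borsukUlamProperty_succ_iff hτc hτ]
    exact fun hk => (secat_le_of_hasEquivariantMapToSphere hτc hτ hk).not_gt hn

theorem not_borsukUlamProperty_of_secat_eq [T2Space X] [NormalSpace X] (hτc : Continuous τ)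
    (hτ : Involutive τ) (hfree : ∀ x, τ x ≠ x) {m : ℕ} (h : secat (involQuotMk τ) = m) :
    ¬ BorsukUlamProperty X τ (EuclideanSpace ℝ (Fin m)) := by
  cases m with
  | zero =>
    have : IsEmpty X := isEmpty_involQuot_iff.1 (secat_eq_zero_iff.1 (by exact_mod_cast h))
    exact fun hBU => isEmptyElim (hBU 0 continuous_const).choose
  | succ k =>
    rw [borsukUlamProperty_succ_iff hτc hτ, not_not]
    exact hasEquivariantMapToSphere_of_secat_eq hτc hτ hfree h

end FreeInvolution

namespace CWStructure

variable {X : Type*} [TopologicalSpace X] (S : CWStructure X)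

def closedCell (n : ℕ) (i : S.cell n) : Set X := S.map n i '' closedBall 0 1

def openCell (n : ℕ) (i : S.cell n) : Set X := S.map n i '' ball 0 1

lemma isCompact_closedCell (n : ℕ) (i : S.cell n) : IsCompact (S.closedCell n i) :=
  (isCompact_closedBall _ _).image_of_continuousOn (S.continuousOn n i)

lemma openCell_subset_closedCell (n : ℕ) (i : S.cell n) : S.openCell n i ⊆ S.closedCell n i :=
  image_mono ball_subset_closedBall

lemma closedCell_subset_skeleton {n N : ℕ} (h : n ≤ N) (i : S.cell n) :
    S.closedCell n i ⊆ S.skeleton N := fun _ hx =>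
  mem_iUnion.2 ⟨n, mem_iUnion.2 ⟨h, mem_iUnion.2 ⟨i, hx⟩⟩⟩

lemma eq_of_mem_openCell {x : X} {p p' : Σ n, S.cell n} (hp : x ∈ S.openCell p.1 p.2)
    (hp' : x ∈ S.openCell p'.1 p'.2) : p = p' :=
  (S.partition x).unique hp hp'

lemma exists_openCell_of_mem_closedCell {n : ℕ} {i : S.cell n} {x : X}
    (hx : x ∈ S.closedCell n i) : ∃ p : Σ k, S.cell k, p.1 ≤ n ∧ x ∈ S.openCell p.1 p.2 := by
  induction n using Nat.strong_induction_on generalizing x with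
  | _ n ih =>
    obtain ⟨y, hy, rfl⟩ := hx
    rw [← ball_union_sphere] at hy
    rcases hy with hy | hy
    · exact ⟨⟨n, i⟩, le_rfl, y, hy, rfl⟩
    · have hbd := S.mapsTo_boundary n i hy
      simp only [mem_iUnion] at hbd
      obtain ⟨m, hm, j, hmj⟩ := hbd
      obtain ⟨p, hp, hpx⟩ := ih m hm hmj
      exact ⟨p, hp.trans hm.le, hpx⟩

lemma exists_openCell_of_mem_skeleton {N : ℕ} {x : X} (hx : x ∈ S.skeleton N) :
    ∃ p : Σ k, S.cell k, p.1 ≤ N ∧ x ∈ S.openCell p.1 p.2 := by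
  simp only [skeleton, mem_iUnion] at hx
  obtain ⟨m, hm, j, hx⟩ := hx
  obtain ⟨p, hp, hpx⟩ := S.exists_openCell_of_mem_closedCell hx
  exact ⟨p, hp.trans hm, hpx⟩

lemma mapsTo_sphere_skeleton (n : ℕ) (i : S.cell (n + 1)) :
    MapsTo (S.map (n + 1) i) (sphere 0 1) (S.skeleton n) := fun _ hy => by
  have hbd := S.mapsTo_boundary (n + 1) i hy
  simp only [mem_iUnion] at hbd
  obtain ⟨m, hm, j, hmj⟩ := hbd
  exact S.closedCell_subset_skeleton (Nat.lt_succ_iff.1 hm) j hmj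

lemma skeleton_eq_univ {d : ℕ} (hdim : S.DimLE d) : S.skeleton d = univ :=
  eq_univ_of_forall fun x => by
    obtain ⟨p, hp, -⟩ := S.partition x
    have hpd : p.1 ≤ d := not_lt.1 fun hlt => (hdim p.1 hlt).false p.2
    exact S.closedCell_subset_skeleton hpd p.2 (S.openCell_subset_closedCell _ _ hp)

lemma exists_extension_on_cell {C : Set X} (hC : IsClosed C) {f : X → ℝ} (hf : ContinuousOn f C)
    {n : ℕ} {F : X → ℝ} (hF : ContinuousOn F (S.skeleton n)) (hFC : EqOn F f C)
    (i : S.cell (n + 1)) :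
    ∃ g : EuclideanSpace ℝ (Fin (n + 1)) → ℝ, Continuous g ∧
      EqOn g (F ∘ S.map (n + 1) i) (sphere 0 1 ∪ closedBall 0 1 ∩ S.map (n + 1) i ⁻¹' C) := by
  have hmapC : IsClosed (closedBall 0 1 ∩ S.map (n + 1) i ⁻¹' C) :=
    (S.continuousOn _ i).preimage_isClosed_of_isClosed isClosed_closedBall hC
  refine ContinuousOn.exists_continuous_eqOn (isClosed_sphere.union hmapC) ?_
  refine ContinuousOn.union_of_isClosed ?_ ?_ isClosed_sphere hmapC
  · exact hF.comp ((S.continuousOn _ i).mono sphere_subset_closedBall)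
      (S.mapsTo_sphere_skeleton n i)
  · exact (hf.comp ((S.continuousOn _ i).mono inter_subset_left) fun y hy => hy.2).congr
      fun y hy => hFC hy.2

variable [T2Space X]

/-- By closure finiteness, a higher closed cell meets `D` only inside finitely many closed cells
of the skeleton. -/
lemma isClosed_of_subset_skeleton {N : ℕ} {D : Set X} (hD : D ⊆ S.skeleton N)
    (hcl : ∀ n ≤ N, ∀ i : S.cell n, IsClosed (D ∩ S.closedCell n i)) : IsClosed D := by
  refine S.weakTopology D fun n => ?_
  induction n using Nat.strong_induction_on with
  | _ n ih =>
    intro i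
    rcases le_or_gt n N with hn | hn
    · exact hcl n hn i
    let F := {p : Σ m, S.cell m | (S.openCell p.1 p.2 ∩ S.closedCell n i).Nonempty ∧ p.1 < n}
    have hF : F.Finite := (S.closureFinite n i).subset fun p hp => hp.1
    have hDF : D ∩ S.closedCell n i = ⋃ p ∈ F, D ∩ S.closedCell p.1 p.2 ∩ S.closedCell n i := by
      refine Subset.antisymm (fun x hx => ?_) (iUnion₂_subset fun p _ x hx => ⟨hx.1.1, hx.2⟩)
      obtain ⟨p, hpN, hpx⟩ := S.exists_openCell_of_mem_skeleton (hD hx.1)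
      exact mem_biUnion ⟨⟨x, hpx, hx.2⟩, hpN.trans_lt hn⟩
        ⟨⟨hx.1, S.openCell_subset_closedCell _ _ hpx⟩, hx.2⟩
    change IsClosed (D ∩ S.closedCell n i)
    rw [hDF]
    exact hF.isClosed_biUnion fun p hp =>
      (ih p.1 hp.2 p.2).inter (S.isCompact_closedCell n i).isClosed

lemma continuousOn_skeleton_of_forall_cell {Y : Type*} [TopologicalSpace Y] {N : ℕ} {f : X → Y}
    (hf : ∀ n ≤ N, ∀ i : S.cell n, ContinuousOn (f ∘ S.map n i) (closedBall 0 1)) :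
    ContinuousOn f (S.skeleton N) := by
  refine continuousOn_iff_isClosed.2 fun t ht => ⟨S.skeleton N ∩ f ⁻¹' t, ?_, by
    rw [inter_comm (S.skeleton N), inter_assoc, inter_self]⟩
  refine S.isClosed_of_subset_skeleton inter_subset_left fun n hn i => ?_
  have hcell : S.skeleton N ∩ f ⁻¹' t ∩ S.closedCell n i =
      S.map n i '' (closedBall 0 1 ∩ (f ∘ S.map n i) ⁻¹' t) := by
    refine Subset.antisymm ?_ ?_
    · rintro x ⟨⟨-, hxt⟩, y, hy, rfl⟩
      exact ⟨y, ⟨hy, hxt⟩, rfl⟩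
    · rintro x ⟨y, ⟨hy, hyt⟩, rfl⟩
      exact ⟨⟨S.closedCell_subset_skeleton hn i (mem_image_of_mem _ hy), hyt⟩,
        mem_image_of_mem _ hy⟩
  rw [hcell]
  exact (((isCompact_closedBall _ _).of_isClosed_subset
    ((hf n hn i).preimage_isClosed_of_isClosed isClosed_closedBall ht) inter_subset_left)
    |>.image_of_continuousOn ((S.continuousOn n i).mono inter_subset_left)).isClosed

lemma exists_extension_step {C : Set X} (hC : IsClosed C) {f : X → ℝ} (hf : ContinuousOn f C)
    {n : ℕ} {F : X → ℝ} (hF : ContinuousOn F (S.skeleton n)) (hFC : EqOn F f C) :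
    ∃ F' : X → ℝ, ContinuousOn F' (S.skeleton (n + 1)) ∧ EqOn F' f C := by
  choose g hgc hgF using S.exists_extension_on_cell hC hf hF hFC
  let Φ : (Σ _ : S.cell (n + 1), ball (0 : EuclideanSpace ℝ (Fin (n + 1))) 1) → X :=
    fun a => S.map (n + 1) a.1 a.2
  have hΦ : Injective Φ := by
    rintro ⟨i, y, hy⟩ ⟨j, z, hz⟩ hyz
    obtain rfl : i = j := eq_of_heq (Sigma.mk.inj_iff.1
      (S.eq_of_mem_openCell (p := ⟨n + 1, i⟩) (p' := ⟨n + 1, j⟩) ⟨y, hy, hyz⟩ ⟨z, hz, rfl⟩)).2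
    obtain rfl : y = z := S.injOn (n + 1) i hy hz hyz
    rfl
  have hΦskel : ∀ x ∈ S.skeleton n, ¬∃ a, Φ a = x := by
    rintro x hx ⟨⟨i, y, hy⟩, rfl⟩
    obtain ⟨p, hpn, hpx⟩ := S.exists_openCell_of_mem_skeleton hx
    have : p.1 = n + 1 :=
      congrArg Sigma.fst (S.eq_of_mem_openCell (p' := ⟨n + 1, i⟩) hpx ⟨y, hy, rfl⟩)
    omega
  let F' := extend Φ (fun a => g a.1 a.2) F
  have hF'cell : ∀ i, ∀ y ∈ ball (0 : EuclideanSpace ℝ (Fin (n + 1))) 1,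
      F' (S.map (n + 1) i y) = g i y := fun i y hy => hΦ.extend_apply _ F ⟨i, y, hy⟩
  have hF'skel : ∀ x ∈ S.skeleton n, F' x = F x := fun x hx => extend_apply' _ F x (hΦskel x hx)
  refine ⟨F', S.continuousOn_skeleton_of_forall_cell fun k hk j => ?_, fun x hx => ?_⟩
  · rcases Nat.of_le_succ hk with hk | rfl
    · refine (hF.comp (S.continuousOn k j) fun y hy => ?_).congr fun y hy => ?_
      all_goals have hys := S.closedCell_subset_skeleton hk j (mem_image_of_mem _ hy)
      exacts [hys, hF'skel _ hys]
    · refine (hgc j).continuousOn.congr fun y hy => ?_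
      rw [← ball_union_sphere] at hy
      rcases hy with hy | hy
      · exact hF'cell j y hy
      · rw [comp_apply, hF'skel _ (S.mapsTo_sphere_skeleton n j hy)]
        exact (hgF j (Or.inl hy)).symm
  · by_cases hxΦ : ∃ a, Φ a = x
    · obtain ⟨⟨i, y, hy⟩, rfl⟩ := hxΦ
      rw [hF'cell i y hy, hgF i (Or.inr ⟨ball_subset_closedBall hy, hx⟩)]
      exact hFC hx
    · exact (extend_apply' _ F x hxΦ).trans (hFC hx)

theorem exists_continuous_extension {d : ℕ} (hdim : S.DimLE d) {C : Set X} (hC : IsClosed C)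
    {f : X → ℝ} (hf : ContinuousOn f C) : ∃ F : X → ℝ, Continuous F ∧ EqOn F f C := by
  suffices ∀ n, ∃ F : X → ℝ, ContinuousOn F (S.skeleton n) ∧ EqOn F f C by
    obtain ⟨F, hF, hFC⟩ := this d
    rw [S.skeleton_eq_univ hdim] at hF
    exact ⟨F, continuousOn_univ.1 hF, hFC⟩
  intro n
  induction n with
  | zero =>
    refine ⟨f, S.continuousOn_skeleton_of_forall_cell fun k hk i => ?_, eqOn_refl _ _⟩
    obtain rfl := Nat.le_zero.1 hk
    exact Subsingleton.continuousOn subsingleton_of_subsingleton _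
  | succ n ih =>
    obtain ⟨F, hF, hFC⟩ := ih
    exact S.exists_extension_step hC hf hF hFC

theorem normalSpace {d : ℕ} (hdim : S.DimLE d) : NormalSpace X := by
  classical
  refine ⟨fun A B hA hB hAB => ?_⟩
  have hAB' : ContinuousOn (B.indicator 1 : X → ℝ) (A ∪ B) :=
    ContinuousOn.union_of_isClosed
      (continuousOn_const.congr fun x hx => indicator_of_notMem (disjoint_left.1 hAB hx) _)
      (continuousOn_const.congr fun x hx => indicator_of_mem hx _) hA hB
  obtain ⟨F, hF, hFAB⟩ := S.exists_continuous_extension hdim (hA.union hB) hAB'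
  refine ⟨F ⁻¹' Iio (1 / 2), F ⁻¹' Ioi (1 / 2), isOpen_Iio.preimage hF,
    isOpen_Ioi.preimage hF, fun x hx => ?_, fun x hx => ?_, Iio_disjoint_Ioi_same.preimage F⟩
  · simp [hFAB (Or.inl hx), indicator_of_notMem (disjoint_left.1 hAB hx)]
  · simp [hFAB (Or.inr hx), indicator_of_mem hx, inv_lt_one_of_one_lt₀]

end CWStructure

theorem stmt_18_general (m : ℕ) {M : Type*} [TopologicalSpace M] [T2Space M]
    (S : CWStructure M) (hdim : S.DimEq m)
    (τ : M → M) (hτc : Continuous τ) (hτinv : Function.Involutive τ)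
    (hτfree : ∀ x, τ x ≠ x)
    (h : secat (involQuotMk τ) = (m : ℕ∞)) :
    z2Index τ = (m : ℕ∞) - 1 ∧
    (∀ n : ℕ, n < m → BorsukUlamProperty M τ (EuclideanSpace ℝ (Fin n))) ∧
    ¬ BorsukUlamProperty M τ (EuclideanSpace ℝ (Fin m)) := by
  have : NormalSpace M := S.normalSpace hdim.1
  refine ⟨?_, fun n hn => borsukUlamProperty_of_lt_secat hτc hτinv (h ▸ by exact_mod_cast hn),
    not_borsukUlamProperty_of_secat_eq hτc hτinv hτfree h⟩
  rw [z2Index_eq_secat_sub_one hτc hτinv hτfree, h]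

/-- for a connected `m`-dimensional CW complex `M` with free cellular
involution `τ`, if `secat (q : M → M/τ) = m` then the `ℤ/2`-index of `(M,τ)` is `m − 1`;
that is, `((M,τ);ℝⁿ)` satisfies the BUP for all `n < m`, but `((M,τ);ℝᵐ)` does not. -/
theorem stmt_18 (m : ℕ) {M : Type*} [TopologicalSpace M] [T2Space M] [ConnectedSpace M]
    (S : CWStructure M) (hdim : S.DimEq m)
    (τ : M → M) (hτc : Continuous τ) (hτinv : Function.Involutive τ)
    (hτfree : ∀ x, τ x ≠ x) (hτcell : S.Cellular τ)
    (h : secat (involQuotMk τ) = (m : ℕ∞)) :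
    z2Index τ = (m : ℕ∞) - 1 ∧
    (∀ n : ℕ, n < m → BorsukUlamProperty M τ (EuclideanSpace ℝ (Fin n))) ∧
    ¬ BorsukUlamProperty M τ (EuclideanSpace ℝ (Fin m)) :=
  stmt_18_general m S hdim τ hτc hτinv hτfree h
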